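/- arXiv:1411.4685 — 3 statements merged into one kernel-verified Lean document; each statement's English description precedes it below -/
import Mathlib

section
/- Let p ≥ 5 be a prime. Then GL₂(𝔽_p) has no normal subgroup of index p. -/
open Matrix

private lemma diag_mul_transvection_aux (p : ℕ) [Fact p.Prime] (i j : Fin 2) (hij : i ≠ j)
    (c : ZMod p) :
    diagonal (fun k => if k = i then (2:ZMod p) else 1) * transvection i j c
      = transvection i j (c + c) * diagonal (fun k => if k = i then (2:ZMod p) else 1) := by
  fin_cases i <;> fin_cases j <;> simp_all <;>
  · ext a b
    fin_cases a <;> fin_cases b <;>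
      simp [transvection, Matrix.mul_apply, Fin.sum_univ_two, Matrix.one_apply,
        Matrix.single, Matrix.diagonal] <;> ring

/-- Let `p ≥ 5` be a prime. Then `GL₂(𝔽_p)` has no normal subgroup of index `p`. -/
theorem no_normal_subgroup_of_index_p (p : ℕ) [Fact p.Prime] (hp : 5 ≤ p)
    (H : Subgroup (GL (Fin 2) (ZMod p))) (hH : H.Normal) : H.index ≠ p := by
  intro hind
  have hp' : p.Prime := Fact.out
  set G := GL (Fin 2) (ZMod p) with hG
  have hcard : Nat.card (G ⧸ H) = p := hind
  haveI : Fact (Nat.card (G ⧸ H)).Prime := ⟨by rw [hcard]; exact hp'⟩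
  haveI : IsCyclic (G ⧸ H) := isCyclic_of_prime_card hcard
  have hcomm : ∀ x y : G ⧸ H, x * y = y * x := by
    letI := IsCyclic.commGroup (α := G ⧸ H)
    exact fun x y => mul_comm x y
  have h2 : (2 : ZMod p) ≠ 0 := by
    have : ((2 : ℕ) : ZMod p) ≠ 0 := by
      rw [Ne, ZMod.natCast_eq_zero_iff]
      intro hdvd
      have := Nat.le_of_dvd (by norm_num) hdvd
      omega
    simpa using this
  -- Every element of G maps to 1 in the quotient.
  have key : ∀ g : G, ((g : G) : G ⧸ H) = 1 := by
    intro g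
    have hdet : det (g : Matrix (Fin 2) (Fin 2) (ZMod p)) ≠ 0 := by
      have := (Matrix.isUnit_iff_isUnit_det _).mp g.isUnit
      exact this.ne_zero
    refine Matrix.diagonal_transvection_induction_of_det_ne_zero
      (fun A => ∀ u : G, (u : Matrix (Fin 2) (Fin 2) (ZMod p)) = A → ((u : G) : G ⧸ H) = 1)
      (g : Matrix (Fin 2) (Fin 2) (ZMod p)) hdet ?_ ?_ ?_ g rfl
    · -- diagonal case: order divides p - 1
      intro D hD u hu
      have hDne : ∀ k, D k ≠ 0 := by
        intro k hk
        apply hD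
        rw [det_diagonal]
        exact Finset.prod_eq_zero (Finset.mem_univ k) hk
      have hpow : u ^ (p - 1) = 1 := by
        apply Units.ext
        rw [Units.val_pow_eq_pow_val, Units.val_one, hu, Matrix.diagonal_pow]
        convert Matrix.diagonal_one using 2
        ext k
        exact ZMod.pow_card_sub_one_eq_one (hDne k)
      have h1 : ((u : G) : G ⧸ H) ^ (p - 1) = 1 := by
        rw [← QuotientGroup.mk_pow, hpow]; rfl
      have hdvd1 : orderOf ((u : G) : G ⧸ H) ∣ p - 1 := orderOf_dvd_of_pow_eq_one h1
      have hdvd2 : orderOf ((u : G) : G ⧸ H) ∣ p := by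
        have := orderOf_dvd_natCard ((u : G) : G ⧸ H)
        rwa [hcard] at this
      have : orderOf ((u : G) : G ⧸ H) ∣ Nat.gcd (p - 1) p := Nat.dvd_gcd hdvd1 hdvd2
      have hgcd : Nat.gcd (p - 1) p = 1 := by
        have hpp : p - 1 + 1 = p := Nat.succ_pred_eq_of_pos hp'.pos
        have : Nat.Coprime (p - 1) (p - 1 + 1) := by
          simpa using Nat.coprime_succ_self_left (n := p - 1)
        rwa [hpp] at this
      rw [hgcd, Nat.dvd_one] at this
      exact orderOf_eq_one_iff.mp this
    · -- transvection case
      intro t u hu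
      -- build the diagonal unit d
      set Dm : Matrix (Fin 2) (Fin 2) (ZMod p) :=
        diagonal (fun k => if k = t.i then (2:ZMod p) else 1) with hDm
      have hdetD : Dm.det ≠ 0 := by
        rw [hDm, det_diagonal, Finset.prod_ne_zero_iff]
        intro k _
        split_ifs
        · exact h2
        · exact one_ne_zero
      have hDu : IsUnit Dm := (Matrix.isUnit_iff_isUnit_det _).mpr (Ne.isUnit hdetD)
      obtain ⟨d, hd⟩ := hDu
      -- key relation : d * u = (u * u) * d
      have hrel : d * u = (u * u) * d := by
        apply Units.ext
        show (d : Matrix (Fin 2) (Fin 2) (ZMod p)) * (u : Matrix (Fin 2) (Fin 2) (ZMod p))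
          = ((u : Matrix (Fin 2) (Fin 2) (ZMod p)) * u) * d
        rw [hd, hu]
        show Dm * t.toMatrix = t.toMatrix * t.toMatrix * Dm
        rw [TransvectionStruct.toMatrix, Matrix.transvection_mul_transvection_same _ _ t.hij]
        exact diag_mul_transvection_aux p t.i t.j t.hij t.c
      -- push to quotient
      have hq : ((d : G) : G ⧸ H) * ((u : G) : G ⧸ H)
          = (((u : G) : G ⧸ H) * ((u : G) : G ⧸ H)) * ((d : G) : G ⧸ H) := by
        have := congrArg (QuotientGroup.mk (s := H)) hrel
        simpa [QuotientGroup.mk_mul] using this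
      rw [hcomm ((d : G) : G ⧸ H) _] at hq
      have := mul_right_cancel hq
      exact left_eq_mul.mp this
    · -- multiplication case
      intro A B hA hB PA PB u hu
      obtain ⟨a, ha⟩ := (Matrix.isUnit_iff_isUnit_det A).mpr (Ne.isUnit hA)
      obtain ⟨b, hb⟩ := (Matrix.isUnit_iff_isUnit_det B).mpr (Ne.isUnit hB)
      have : u = a * b := by
        apply Units.ext
        rw [Units.val_mul, ha, hb, hu]
      rw [this, QuotientGroup.mk_mul, PA a ha, PB b hb, one_mul]
  have hHtop : H = ⊤ := by
    rw [eq_top_iff]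
    intro g _
    exact (QuotientGroup.eq_one_iff g).mp (key g)
  rw [hHtop, Subgroup.index_top] at hind
  omega
end

section
/- Let p be an odd prime and M an 𝔽_p-vector space with a linear action of an involution τ and a linear operator g satisfying τgτ⁻¹ = g⁻¹ as operators on M. Suppose s ∈ M satisfies gs = s and τs = εs with ε ∈ {±1}, and suppose e ∈ M satisfies (g−1)e = ys for some nonzero y ∈ 𝔽_p, and τe ≡ ε'e mod 𝔽_p·s with ε' ∈ {±1}. Then ε' = −ε, and there exists e' ∈ e + 𝔽_p·s with τe' = −ε·e' and (g−1)e' = ys. -/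
/-- Let `p` be odd, `M` an `𝔽_p`-vector space with a linear involution `τ` and an invertible
linear operator `g` satisfying `τ g τ⁻¹ = g⁻¹`.  Suppose `g s = s`, `τ s = ε s` with
`ε ∈ {±1}`, `(g - 1) e = y s` with `y ≠ 0`, and `τ e ≡ ε' e (mod 𝔽_p·s)` with `ε' ∈ {±1}`.
Then `ε' = -ε`, and there is `e' ∈ e + 𝔽_p·s` with `τ e' = -ε e'` and `(g - 1) e' = y s`. -/
theorem eigenvalue_flip (p : ℕ) [Fact p.Prime] (hp : Odd p)
    (M : Type) [AddCommGroup M] [Module (ZMod p) M]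
    (g : M ≃ₗ[ZMod p] M) (τ : M →ₗ[ZMod p] M) (hτ : ∀ x, τ (τ x) = x)
    (hrel : ∀ x : M, τ (g (τ x)) = g.symm x)
    (s e : M) (hs : s ≠ 0) (hgs : g s = s)
    (ε ε' : ZMod p) (hε : ε = 1 ∨ ε = -1) (hε' : ε' = 1 ∨ ε' = -1)
    (hτs : τ s = ε • s)
    (y : ZMod p) (hy : y ≠ 0) (hge : g e - e = y • s)
    (c : ZMod p) (hτe : τ e = ε' • e + c • s) :
    ε' = -ε ∧
      ∃ e' : M, (∃ d : ZMod p, e' = e + d • s) ∧ τ e' = (-ε) • e' ∧ g e' - e' = y • s := by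
  have hfield : ∀ a b : ZMod p, a • s = b • s → a = b := by
    intro a b hab
    have h0 : (a - b) • s = 0 := by rw [sub_smul, hab, sub_self]
    rcases smul_eq_zero.mp h0 with h | h
    · exact sub_eq_zero.mp h
    · exact absurd h hs
  have hp2 : p ≠ 2 := by rintro rfl; exact (by decide : ¬ Odd 2) hp
  have two_ne : (2 : ZMod p) ≠ 0 := by
    intro h
    have h2 : ((2 : ℕ) : ZMod p) = 0 := by push_cast; exact h
    have := (ZMod.natCast_eq_zero_iff 2 p).mp h2
    exact hp2 ((Nat.prime_dvd_prime_iff_eq Fact.out Nat.prime_two).mp this)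
  have hτg : ∀ x, τ (g x) = g.symm (τ x) := fun x => by
    have h := hrel (τ x); rwa [hτ] at h
  have hge' : g e = e + y • s := by rw [← hge]; abel
  have hgs' : g.symm s = s := by rw [LinearEquiv.symm_apply_eq]; exact hgs.symm
  have hge'' : g.symm e = e - y • s := by
    rw [LinearEquiv.symm_apply_eq, map_sub, map_smul, hgs, hge']; abel
  have key : (-(ε' * y)) • s = (ε * y) • s := by
    have h1 : τ (g e - e) = τ (y • s) := congrArg τ hge
    rw [map_sub, map_smul, hτg, hτe, map_add, map_smul, map_smul, hge'', hgs', hτs] at h1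
    linear_combination (norm := module) h1
  have hsum : (ε' + ε) * y = 0 := by
    have h := hfield _ _ key; linear_combination -h
  have hεε' : ε' = -ε := by
    rcases mul_eq_zero.mp hsum with h | h
    · exact eq_neg_of_add_eq_zero_left h
    · exact absurd h hy
  refine ⟨hεε', e + (-(ε * c) / 2) • s, ⟨_, rfl⟩, ?_, ?_⟩
  · rw [map_add, map_smul, hτe, hτs, hεε']
    rcases hε with rfl | rfl <;>
    · match_scalars <;> field_simp <;> ring
  · rw [map_add, map_smul, hgs, hge']; abel
end

section
/- Let p be a prime, Γ ≅ ℤ_p a profinite group with closed subgroups Γ_n = Γ^{p^n}, and let M be a discrete Γ-module over 𝔽_p which is cofinitely generated over Λ̄ = 𝔽_p[[Γ]] ≅ 𝔽_p[[T]]. If dim_{𝔽_p} M^{Γ_n} = 2p^n for all n ≥ 0, then the Pontryagin dual M^∨ is a free Λ̄-module of rank 2. -/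
section PontryaginDual

variable (p : ℕ) [Fact p.Prime] (M : Type) [AddCommGroup M] [Module (ZMod p) M]
  [Module (PowerSeries (ZMod p)) M] [SMulCommClass (ZMod p) (PowerSeries (ZMod p)) M]

/-- Multiplication by `a ∈ Λ̄ = 𝔽_p[[T]]` as an `𝔽_p`-linear map on `M`. -/
noncomputable def smulLM (a : PowerSeries (ZMod p)) : M →ₗ[ZMod p] M where
  toFun m := a • m
  map_add' x y := smul_add a x y
  map_smul' c m := (smul_comm c a m).symm

/-- The Pontryagin dual of a discrete `Λ̄`-module `M` (an `𝔽_p`-vector space), namely its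
full `𝔽_p`-linear dual. -/
def PDual : Type := M →ₗ[ZMod p] ZMod p

instance : AddCommGroup (PDual p M) :=
  inferInstanceAs (AddCommGroup (M →ₗ[ZMod p] ZMod p))

/-- A `PDual` element as a bona fide linear map. -/
def PDual.lin (f : PDual p M) : M →ₗ[ZMod p] ZMod p := f

/-- The `Λ̄`-module structure on the Pontryagin dual: `(a • f) m = f (a • m)`. -/
noncomputable instance : Module (PowerSeries (ZMod p)) (PDual p M) where
  smul a f := LinearMap.comp (PDual.lin p M f) (smulLM p M a)
  one_smul f := LinearMap.ext fun m => by
    show PDual.lin p M f ((1 : PowerSeries (ZMod p)) • m) = PDual.lin p M f m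
    rw [one_smul]
  mul_smul a b f := LinearMap.ext fun m => by
    show PDual.lin p M f ((a * b) • m) = PDual.lin p M f (b • a • m)
    rw [mul_comm, mul_smul]
  smul_zero a := LinearMap.ext fun m => rfl
  smul_add a f g := LinearMap.ext fun m => rfl
  add_smul a b f := LinearMap.ext fun m => by
    show PDual.lin p M f ((a + b) • m) =
      PDual.lin p M f (a • m) + PDual.lin p M f (b • m)
    rw [add_smul, map_add]
  zero_smul f := LinearMap.ext fun m => by
    show PDual.lin p M f ((0 : PowerSeries (ZMod p)) • m) = 0
    rw [zero_smul, map_zero]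

/-- The `𝔽_p`-subspace of `M` killed by `a ∈ Λ̄`; for `a = T^{p^n}` these are the
`Γ_n`-invariants `M^{Γ_n}` of the corresponding discrete `Γ`-module (and for `a = T` the
`Γ`-invariants `M^Γ = M[T]`). -/
def invariantsKer (a : PowerSeries (ZMod p)) : Submodule (ZMod p) M where
  carrier := {m | a • m = 0}
  zero_mem' := smul_zero a
  add_mem' := by
    intro x y hx hy
    show a • (x + y) = 0
    rw [smul_add, hx, hy, add_zero]
  smul_mem' := by
    intro c m hm
    show a • c • m = 0
    rw [← smul_comm c a m, hm, smul_zero]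

/-- The Pontryagin dual `Λ̄^∨` of `Λ̄ = 𝔽_p[[T]]` itself, realized as
`𝔽_p((T))/𝔽_p[[T]]`. -/
def PontLambdaDual : Type :=
  LaurentSeries (ZMod p) ⧸
    LinearMap.range (Algebra.linearMap (PowerSeries (ZMod p)) (LaurentSeries (ZMod p)))

noncomputable instance : AddCommGroup (PontLambdaDual p) :=
  inferInstanceAs (AddCommGroup (LaurentSeries (ZMod p) ⧸
    LinearMap.range (Algebra.linearMap (PowerSeries (ZMod p)) (LaurentSeries (ZMod p)))))

noncomputable instance : Module (PowerSeries (ZMod p)) (PontLambdaDual p) :=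
  inferInstanceAs (Module (PowerSeries (ZMod p)) (LaurentSeries (ZMod p) ⧸
    LinearMap.range (Algebra.linearMap (PowerSeries (ZMod p)) (LaurentSeries (ZMod p)))))

end PontryaginDual

/-!
Dualizing `0 → M[a] → M → M` (the last map being multiplication by `a`) gives
`M^∨ / a M^∨ ≅ M[a]^∨`, so `M^∨ / T^{p^n} M^∨` has dimension `2 p^n`. For `n = 0`,
Nakayama's lemma yields a surjection `Λ̄² → M^∨`. It induces surjections
`Λ̄² / T^{p^n} → M^∨ / T^{p^n} M^∨` between spaces of the same dimension `2 p^n`, hence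
isomorphisms, so its kernel lies in `⋂ₙ T^{p^n} Λ̄² = 0`.
-/

open Module Submodule
open scoped Pointwise

theorem LinearMap.finrank_quotient_range_dualMap {K V W : Type*} [Field K] [AddCommGroup V]
    [Module K V] [AddCommGroup W] [Module K W] (f : V →ₗ[K] W) [FiniteDimensional K (ker f)] :
    finrank K (Dual K V ⧸ range f.dualMap) = finrank K (ker f) := by
  rw [range_dualMap_eq_dualAnnihilator_ker, (Subspace.quotAnnihilatorEquiv _).finrank_eq,
    Subspace.dual_finrank_eq]

theorem Submodule.mem_smul_top_pi_iff {R ι : Type*} [CommRing R] (a : R) (x : ι → R) :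
    x ∈ a • (⊤ : Submodule R (ι → R)) ↔ ∀ i, a ∣ x i := by
  rw [mem_smul_pointwise_iff_exists]
  constructor
  · rintro ⟨y, -, rfl⟩ i
    exact dvd_mul_right a (y i)
  · intro h
    choose y hy using h
    exact ⟨y, trivial, funext fun i => (hy i).symm⟩

namespace PowerSeries

variable {k : Type*} [Field k]

noncomputable def piCoeffsBelow (ι : Type*) (m : ℕ) :
    (ι → k⟦X⟧) →ₗ[k] (ι → Fin m → k) :=
  LinearMap.pi fun i => LinearMap.pi fun j => (coeff (j : ℕ)).comp (LinearMap.proj i)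

theorem piCoeffsBelow_surjective (ι : Type*) (m : ℕ) :
    Function.Surjective (piCoeffsBelow (k := k) ι m) := by
  intro v
  refine ⟨fun i => mk fun j => if h : j < m then v i ⟨j, h⟩ else 0, ?_⟩
  funext i j
  simp [piCoeffsBelow, coeff_mk]

theorem ker_piCoeffsBelow (ι : Type*) (m : ℕ) :
    LinearMap.ker (piCoeffsBelow (k := k) ι m) =
      ((X ^ m : k⟦X⟧) • ⊤ : Submodule k⟦X⟧ (ι → k⟦X⟧)).restrictScalars k := by
  ext x
  simp only [LinearMap.mem_ker, restrictScalars_mem, mem_smul_top_pi_iff, X_pow_dvd_iff]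
  simp [piCoeffsBelow, funext_iff, Fin.forall_iff]

noncomputable def piQuotientXPowEquiv (ι : Type*) (m : ℕ) :
    ((ι → k⟦X⟧) ⧸ (X ^ m : k⟦X⟧) • (⊤ : Submodule k⟦X⟧ (ι → k⟦X⟧))) ≃ₗ[k] (ι → Fin m → k) :=
  (Quotient.restrictScalarsEquiv k _).symm ≪≫ₗ
    quotEquivOfEq _ _ (ker_piCoeffsBelow ι m).symm ≪≫ₗ
    (piCoeffsBelow (k := k) ι m).quotKerEquivOfSurjective (piCoeffsBelow_surjective ι m)

instance (ι : Type*) [Finite ι] (m : ℕ) :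
    FiniteDimensional k ((ι → k⟦X⟧) ⧸ (X ^ m : k⟦X⟧) • (⊤ : Submodule k⟦X⟧ (ι → k⟦X⟧))) :=
  (piQuotientXPowEquiv ι m).symm.finiteDimensional

theorem finrank_pi_quotient_X_pow_smul_top (ι : Type*) [Fintype ι] (m : ℕ) :
    finrank k ((ι → k⟦X⟧) ⧸ (X ^ m : k⟦X⟧) • (⊤ : Submodule k⟦X⟧ (ι → k⟦X⟧))) =
      Fintype.card ι * m := by
  simp [(piQuotientXPowEquiv ι m).finrank_eq, Module.finrank_pi_fintype]

variable {N : Type*} [AddCommGroup N] [Module k⟦X⟧ N] [Module k N] [IsScalarTower k k⟦X⟧ N]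

theorem span_eq_top_of_span_mkQ_X_smul_top [Module.Finite k⟦X⟧ N] {ι : Type*} (f : ι → N)
    (hf : span k (Set.range (mkQ ((X : k⟦X⟧) • (⊤ : Submodule k⟦X⟧ N)) ∘ f)) = ⊤) :
    span k⟦X⟧ (Set.range f) = ⊤ := by
  rw [← IsLocalRing.map_mkQ_eq_top, maximalIdeal_eq_span_X, ideal_span_singleton_smul,
    map_span, ← Set.range_comp, eq_top_iff]
  exact fun x _ => span_le_restrictScalars k k⟦X⟧ _ (hf ▸ mem_top)

theorem exists_surjective_of_finrank_quotient_X_smul_top [Module.Finite k⟦X⟧ N]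
    [FiniteDimensional k (N ⧸ (X : k⟦X⟧) • (⊤ : Submodule k⟦X⟧ N))] {r : ℕ}
    (hr : finrank k (N ⧸ (X : k⟦X⟧) • (⊤ : Submodule k⟦X⟧ N)) = r) :
    ∃ φ : (Fin r → k⟦X⟧) →ₗ[k⟦X⟧] N, Function.Surjective φ := by
  let b := Module.finBasisOfFinrankEq k _ hr
  choose f hf using fun i => mkQ_surjective _ (b i)
  refine ⟨Fintype.linearCombination k⟦X⟧ f, ?_⟩
  rw [← LinearMap.range_eq_top, Fintype.range_linearCombination]
  refine span_eq_top_of_span_mkQ_X_smul_top f ?_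
  rw [← b.span_eq, show mkQ _ ∘ f = b from funext hf]

theorem ker_le_X_pow_smul_top_of_finrank_eq {ι : Type*} [Fintype ι]
    (φ : (ι → k⟦X⟧) →ₗ[k⟦X⟧] N) (hφ : Function.Surjective φ) {m : ℕ}
    (hm : finrank k (N ⧸ (X ^ m : k⟦X⟧) • (⊤ : Submodule k⟦X⟧ N)) = Fintype.card ι * m) :
    LinearMap.ker φ ≤ (X ^ m : k⟦X⟧) • ⊤ := by
  set P : Submodule k⟦X⟧ (ι → k⟦X⟧) := (X ^ m : k⟦X⟧) • ⊤
  set Q : Submodule k⟦X⟧ N := (X ^ m : k⟦X⟧) • ⊤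
  have hPQ : P ≤ Q.comap φ := by
    intro x hx
    obtain ⟨y, -, rfl⟩ := (mem_smul_pointwise_iff_exists _ _ _).mp hx
    rw [mem_comap, map_smul]
    exact smul_mem_pointwise_smul _ _ _ mem_top
  let ψ := (P.mapQ Q φ hPQ).restrictScalars k
  have hψ : Function.Surjective ψ := by
    intro z
    obtain ⟨y, rfl⟩ := mkQ_surjective Q z
    obtain ⟨x, rfl⟩ := hφ y
    exact ⟨Submodule.Quotient.mk x, rfl⟩
  have : FiniteDimensional k (N ⧸ Q) := Module.Finite.of_surjective ψ hψ
  have hψinj : Function.Injective ψ :=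
    (LinearMap.injective_iff_surjective_of_finrank_eq_finrank
      (by rw [finrank_pi_quotient_X_pow_smul_top, hm])).mpr hψ
  intro x hx
  rw [← Quotient.mk_eq_zero]
  refine hψinj ?_
  show Submodule.Quotient.mk (φ x) = ψ 0
  rw [LinearMap.mem_ker.mp hx, map_zero, Quotient.mk_zero]

theorem injective_of_finrank_quotient_X_pow_smul_top {ι : Type*} [Fintype ι]
    (φ : (ι → k⟦X⟧) →ₗ[k⟦X⟧] N) (hφ : Function.Surjective φ)
    (h : ∀ j, ∃ m, j < m ∧
      finrank k (N ⧸ (X ^ m : k⟦X⟧) • (⊤ : Submodule k⟦X⟧ N)) = Fintype.card ι * m) :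
    Function.Injective φ := by
  rw [← LinearMap.ker_eq_bot, eq_bot_iff]
  intro x hx
  rw [mem_bot]
  ext i j
  obtain ⟨m, hjm, hm⟩ := h j
  have hdvd := (mem_smul_top_pi_iff _ x).mp (ker_le_X_pow_smul_top_of_finrank_eq φ hφ hm hx) i
  exact X_pow_dvd_iff.mp hdvd j hjm

theorem free_and_rank_eq_of_finrank_quotient_X_pow_smul_top [Module.Finite k⟦X⟧ N]
    [FiniteDimensional k (N ⧸ (X : k⟦X⟧) • (⊤ : Submodule k⟦X⟧ N))] {r : ℕ}
    (h₁ : finrank k (N ⧸ (X : k⟦X⟧) • (⊤ : Submodule k⟦X⟧ N)) = r)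
    (h : ∀ j, ∃ m, j < m ∧ finrank k (N ⧸ (X ^ m : k⟦X⟧) • (⊤ : Submodule k⟦X⟧ N)) = r * m) :
    Module.Free k⟦X⟧ N ∧ Module.rank k⟦X⟧ N = r := by
  obtain ⟨φ, hφ⟩ := exists_surjective_of_finrank_quotient_X_smul_top h₁
  have hφinj := injective_of_finrank_quotient_X_pow_smul_top φ hφ (by simpa using h)
  let e := LinearEquiv.ofBijective φ ⟨hφinj, hφ⟩
  exact ⟨Module.Free.of_equiv e, by simpa using e.lift_rank_eq.symm⟩

end PowerSeries

open PowerSeries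

section PontryaginDual

variable (p : ℕ) [Fact p.Prime] (M : Type) [AddCommGroup M] [Module (ZMod p) M]
  [Module (PowerSeries (ZMod p)) M] [SMulCommClass (ZMod p) (PowerSeries (ZMod p)) M]

instance : Module (ZMod p) (PDual p M) := inferInstanceAs (Module (ZMod p) (Dual (ZMod p) M))

theorem PDual.restrictScalars_smul_top_eq_range_dualMap (a : PowerSeries (ZMod p)) :
    (a • ⊤ : Submodule (PowerSeries (ZMod p)) (PDual p M)).restrictScalars (ZMod p) =
      LinearMap.range (smulLM p M a).dualMap := by
  ext f
  simp only [restrictScalars_mem, mem_smul_pointwise_iff_exists, mem_top, true_and]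
  rfl

theorem PDual.finrank_quotient_smul_top (a : PowerSeries (ZMod p))
    [FiniteDimensional (ZMod p) (invariantsKer p M a)] :
    finrank (ZMod p) (PDual p M ⧸ a • (⊤ : Submodule (PowerSeries (ZMod p)) (PDual p M))) =
      finrank (ZMod p) (invariantsKer p M a) := by
  have : FiniteDimensional (ZMod p) (LinearMap.ker (smulLM p M a)) :=
    ‹FiniteDimensional (ZMod p) (invariantsKer p M a)›
  rw [← (Quotient.restrictScalarsEquiv (ZMod p) _).finrank_eq,
    restrictScalars_smul_top_eq_range_dualMap]
  exact (smulLM p M a).finrank_quotient_range_dualMap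

end PontryaginDual

/-- Let `Γ ≅ ℤ_p` with subgroups `Γ_n = Γ^{p^n}`, and let `M` be a discrete `Γ`-module over
`𝔽_p`, i.e. a module over `Λ̄ = 𝔽_p[[Γ]] ≅ 𝔽_p[[T]]` (with a topological generator of `Γ`
acting as `1 + T`, so that `M^{Γ_n} = M[T^{p^n}]` in characteristic `p`), which is cofinitely
generated over `Λ̄` (its Pontryagin dual is finitely generated).  If
`dim_{𝔽_p} M^{Γ_n} = 2·p^n` for all `n ≥ 0`, then the Pontryagin dual `M^∨` is a free
`Λ̄`-module of rank `2`. -/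
theorem dual_free_rank_two_of_invariants_growth (p : ℕ) [Fact p.Prime]
    (M : Type) [AddCommGroup M] [Module (ZMod p) M] [Module (PowerSeries (ZMod p)) M]
    [SMulCommClass (ZMod p) (PowerSeries (ZMod p)) M]
    [Module.Finite (PowerSeries (ZMod p)) (PDual p M)]
    (hinv : ∀ n : ℕ, Module.finrank (ZMod p)
      (invariantsKer p M ((PowerSeries.X : PowerSeries (ZMod p)) ^ p ^ n)) = 2 * p ^ n) :
    Module.Free (PowerSeries (ZMod p)) (PDual p M) ∧
      Module.rank (PowerSeries (ZMod p)) (PDual p M) = 2 := by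
  have hp := (Fact.out : p.Prime)
  have hquot (n : ℕ) : finrank (ZMod p)
      (PDual p M ⧸ (X ^ p ^ n : (ZMod p)⟦X⟧) • (⊤ : Submodule (ZMod p)⟦X⟧ (PDual p M))) =
        2 * p ^ n := by
    have : FiniteDimensional (ZMod p) (invariantsKer p M (X ^ p ^ n)) :=
      Module.finite_of_finrank_pos (by rw [hinv n]; have := hp.pos; positivity)
    rw [PDual.finrank_quotient_smul_top, hinv]
  have h₁ : finrank (ZMod p)
      (PDual p M ⧸ (X : (ZMod p)⟦X⟧) • (⊤ : Submodule (ZMod p)⟦X⟧ (PDual p M))) = 2 := by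
    rw [← pow_one (X : (ZMod p)⟦X⟧), ← pow_zero p, hquot, pow_zero, mul_one]
  have : FiniteDimensional (ZMod p) _ := Module.finite_of_finrank_pos (h₁ ▸ two_pos)
  exact free_and_rank_eq_of_finrank_quotient_X_pow_smul_top h₁
    fun j => ⟨p ^ j, j.lt_pow_self hp.one_lt, hquot j⟩
end
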